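/- arXiv:1411.6125 — 2 statements merged into one kernel-verified Lean document; each statement's English description precedes it below -/
import Mathlib

section
/- Define R_n(\lambda(x); \alpha,\beta,\gamma,\delta) = \sum_{k=0}^n ((-n)_k (n+\alpha+\beta+1)_k (-x)_k (x+\gamma+\delta+1)_k) / ((\alpha+1)_k (\beta+\delta+1)_k (\gamma+1)_k k!). Then for a natural number x and complex parameters (with no vanishing denominators), ((x+\alpha+2)(x+\gamma+\delta+1)/(2x+\gamma+\delta+2)) R_n(\lambda(x+1); \alpha+1,\beta-1,\gamma,\delta) - ((x+1)(x-\alpha+\gamma+\delta)/(2x+\gamma+\delta+2)) R_n(\lambda(x); \alpha+1,\beta-1,\gamma,\delta) = (\alpha+1) R_n(\lambda(x+1); \alpha,\beta,\gamma,\delta-1). -/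
open Finset

noncomputable def poch (a : ℂ) (k : ℕ) : ℂ := (ascPochhammer ℂ k).eval a

/-- Racah polynomial as terminating ₄F₃ sum. -/
noncomputable def racah (n : ℕ) (x α β γ δ : ℂ) : ℂ :=
  ∑ k ∈ range (n + 1),
    poch (-(n : ℂ)) k * poch ((n : ℂ) + α + β + 1) k * poch (-x) k * poch (x + γ + δ + 1) k /
      (poch (α + 1) k * poch (β + δ + 1) k * poch (γ + 1) k * (k.factorial : ℂ))

lemma poch_succ (a : ℂ) (k : ℕ) : poch a (k+1) = poch a k * (a + k) :=
  ascPochhammer_succ_eval k a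

lemma poch_shift (a : ℂ) (k : ℕ) : a * poch (a+1) k = poch a k * (a + k) := by
  induction k with
  | zero => simp [poch]
  | succ k ih =>
    rw [poch_succ, poch_succ]
    push_cast
    ring_nf
    ring_nf at ih
    linear_combination (a + 1 + k) * ih

theorem racah_difference_eq2 (n x : ℕ) (α β γ δ : ℂ)
    (hden : 2 * (x : ℂ) + γ + δ + 2 ≠ 0)
    (h1 : ∀ k ≤ n, poch (α + 1) k ≠ 0) (h2 : ∀ k ≤ n, poch (α + 2) k ≠ 0)
    (h3 : ∀ k ≤ n, poch (β + δ) k ≠ 0) (h4 : ∀ k ≤ n, poch (γ + 1) k ≠ 0) :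
    ((x : ℂ) + α + 2) * ((x : ℂ) + γ + δ + 1) / (2 * (x : ℂ) + γ + δ + 2) *
        racah n ((x : ℂ) + 1) (α + 1) (β - 1) γ δ -
      ((x : ℂ) + 1) * ((x : ℂ) - α + γ + δ) / (2 * (x : ℂ) + γ + δ + 2) *
        racah n (x : ℂ) (α + 1) (β - 1) γ δ =
    (α + 1) * racah n ((x : ℂ) + 1) α β γ (δ - 1) := by
  have e1 : ((n:ℂ) + (α+1) + (β-1) + 1) = (n:ℂ) + α + β + 1 := by ring
  have e2 : (β - 1 + δ + 1) = β + δ := by ring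
  have e3 : (β + (δ-1) + 1) = β + δ := by ring
  have e4 : ((x:ℂ) + 1 + γ + (δ-1) + 1) = (x:ℂ) + γ + δ + 1 := by ring
  have e5 : ((x:ℂ) + 1 + γ + δ + 1) = (x:ℂ) + γ + δ + 2 := by ring
  have e6 : (α + 1 + 1 : ℂ) = α + 2 := by ring
  simp only [racah, e1, e2, e3, e4, e5, e6]
  rw [Finset.mul_sum, Finset.mul_sum, Finset.mul_sum, ← Finset.sum_sub_distrib]
  refine Finset.sum_congr rfl fun k hk => ?_
  rw [Finset.mem_range, Nat.lt_succ_iff] at hk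
  have hP1 := h1 k hk
  have hP2 := h2 k hk
  have hB := h3 k hk
  have hG := h4 k hk
  have hF : (k.factorial : ℂ) ≠ 0 := Nat.cast_ne_zero.mpr (Nat.factorial_ne_zero k)
  have f1 : ((x:ℂ)+γ+δ+1) * poch ((x:ℂ)+γ+δ+2) k
      = poch ((x:ℂ)+γ+δ+1) k * ((x:ℂ)+γ+δ+1+k) := by
    have h := poch_shift ((x:ℂ)+γ+δ+1) k
    rw [show (x:ℂ)+γ+δ+1+1 = (x:ℂ)+γ+δ+2 by ring] at h
    exact h
  have f2 : ((x:ℂ)+1) * poch (-(x:ℂ)) k = poch (-((x:ℂ)+1)) k * ((x:ℂ)+1-k) := by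
    have h := poch_shift (-((x:ℂ)+1)) k
    rw [show -((x:ℂ)+1)+1 = -(x:ℂ) by ring] at h
    linear_combination -h
  have f3 : (α+1) * poch (α+2) k = poch (α+1) k * (α+1+(k:ℂ)) := by
    have h := poch_shift (α+1) k
    rw [show (α+1+1 : ℂ) = α+2 by ring] at h
    exact h
  set N1 := poch (-(n:ℂ)) k
  set N2 := poch ((n:ℂ)+α+β+1) k
  set u := poch (-((x:ℂ)+1)) k
  set v := poch ((x:ℂ)+γ+δ+1) k
  set q := poch ((x:ℂ)+γ+δ+2) k
  set p := poch (-(x:ℂ)) k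
  set P1 := poch (α+1) k
  set P2 := poch (α+2) k
  set Bd := poch (β+δ) k
  set G := poch (γ+1) k
  set kf := (k.factorial : ℂ)
  have hE1 : (2*(x:ℂ)+γ+δ+2) * (P2 * Bd * G * kf) ≠ 0 := by
    exact mul_ne_zero hden (mul_ne_zero (mul_ne_zero (mul_ne_zero hP2 hB) hG) hF)
  have hE2 : P1 * Bd * G * kf ≠ 0 :=
    mul_ne_zero (mul_ne_zero (mul_ne_zero hP1 hB) hG) hF
  rw [div_mul_div_comm, div_mul_div_comm, ← sub_div, ← mul_div_assoc,
    div_eq_div_iff hE1 hE2]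
  linear_combination
    ((x:ℂ)+α+2) * N1 * N2 * u * P1 * Bd * G * kf * f1
    - ((x:ℂ)-α+γ+δ) * N1 * N2 * v * P1 * Bd * G * kf * f2
    - N1 * N2 * u * v * (2*(x:ℂ)+γ+δ+2) * Bd * G * kf * f3
end

section
/- Define the Hahn polynomial Q_n(x; \alpha,\beta,m) = \sum_{k=0}^n ((-n)_k (n+\alpha+\beta+1)_k (-x)_k) / ((\alpha+1)_k (-m)_k k!) as a terminating 3F2 sum. Then for natural numbers x, n, m with m \ge 1 and n \le m-1, (x+1) Q_n(x; \alpha,\beta,m-1) - (x-m+1) Q_n(x+1; \alpha,\beta,m-1) = m \cdot Q_n(x+1; \alpha,\beta,m). -/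
open Finset

/-- Hahn polynomial as terminating ₃F₂ sum. -/
noncomputable def hahnQ (n x : ℕ) (α β : ℂ) (m : ℕ) : ℂ :=
  ∑ k ∈ range (n + 1),
    poch (-(n : ℂ)) k * poch ((n : ℂ) + α + β + 1) k * poch (-(x : ℂ)) k /
      (poch (α + 1) k * poch (-(m : ℂ)) k * (k.factorial : ℂ))

/-!
Only the ratio `(-x)_k / (-m)_k` of the `k`-th term of `hahnQ` depends on `x` and `m`, so the
identity holds term by term. With `(a)_k (a + k) = a (a + 1)_k` both sides of the termwise
identity reduce to `(m - k) (-x-1)_k / (-(m-1))_k`.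
-/

lemma poch_succ_right (a : ℂ) (k : ℕ) : poch a (k + 1) = poch a k * (a + k) := by
  simp [poch, ascPochhammer_succ_right]

lemma poch_succ_left (a : ℂ) (k : ℕ) : poch a (k + 1) = a * poch (a + 1) k := by
  simp [poch, ascPochhammer_succ_left, Polynomial.eval_comp]

lemma poch_mul_add_eq_mul_poch_add_one (a : ℂ) (k : ℕ) :
    poch a k * (a + k) = a * poch (a + 1) k := by
  rw [← poch_succ_right, poch_succ_left]

lemma poch_neg_natCast_ne_zero {k N : ℕ} (h : k ≤ N) : poch (-(N : ℂ)) k ≠ 0 := by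
  induction k with
  | zero => simp [poch]
  | succ k ih =>
    rw [poch_succ_right]
    refine mul_ne_zero (ih (Nat.le_of_succ_le h)) fun hzero => ?_
    have : (N : ℂ) = k := by linear_combination -hzero
    exact (show N ≠ k by omega) (by exact_mod_cast this)

lemma poch_ratio_contiguous (z w : ℂ) (k : ℕ) (hw : poch (-w) k ≠ 0)
    (hw' : poch (-(w + 1)) k ≠ 0) :
    ((z + 1) * poch (-z) k - (z - w) * poch (-(z + 1)) k) / poch (-w) k =
      (w + 1) * poch (-(z + 1)) k / poch (-(w + 1)) k := by
  have hz := poch_mul_add_eq_mul_poch_add_one (-(z + 1)) k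
  have hw₁ := poch_mul_add_eq_mul_poch_add_one (-(w + 1)) k
  rw [show -(z + 1) + 1 = -z by ring] at hz
  rw [show -(w + 1) + 1 = -w by ring] at hw₁
  rw [div_eq_div_iff hw hw']
  linear_combination poch (-(w + 1)) k * hz - poch (-(z + 1)) k * hw₁

lemma hahnQ_eq_sum (n x : ℕ) (α β : ℂ) (m : ℕ) :
    hahnQ n x α β m = ∑ k ∈ range (n + 1),
      poch (-(n : ℂ)) k * poch ((n : ℂ) + α + β + 1) k / (poch (α + 1) k * k.factorial) *
        (poch (-(x : ℂ)) k / poch (-(m : ℂ)) k) := by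
  refine sum_congr rfl fun k _ => ?_
  rw [div_mul_div_comm]
  ring_nf

theorem hahn_difference_eq1_general (n x m : ℕ) (α β : ℂ) (hm : 1 ≤ m) (hn : n ≤ m - 1) :
    ((x : ℂ) + 1) * hahnQ n x α β (m - 1) - ((x : ℂ) - (m : ℂ) + 1) * hahnQ n (x + 1) α β (m - 1) =
    (m : ℂ) * hahnQ n (x + 1) α β m := by
  obtain ⟨M, rfl⟩ : ∃ M, m = M + 1 := ⟨m - 1, by omega⟩
  rw [Nat.add_sub_cancel] at hn ⊢
  simp only [hahnQ_eq_sum, mul_sum, ← sum_sub_distrib]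
  refine sum_congr rfl fun k hk => ?_
  have hkM : k ≤ M := (Nat.lt_succ_iff.mp (mem_range.mp hk)).trans hn
  have hratio := poch_ratio_contiguous x M k (poch_neg_natCast_ne_zero hkM)
    (by exact_mod_cast poch_neg_natCast_ne_zero (N := M + 1) (hkM.trans M.le_succ))
  push_cast
  linear_combination
    poch (-(n : ℂ)) k * poch ((n : ℂ) + α + β + 1) k / (poch (α + 1) k * k.factorial) * hratio

theorem hahn_difference_eq1 (n x m : ℕ) (α β : ℂ) (hm : 1 ≤ m) (hn : n ≤ m - 1)
    (h1 : ∀ k ≤ n, poch (α + 1) k ≠ 0) :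
    ((x : ℂ) + 1) * hahnQ n x α β (m - 1) - ((x : ℂ) - (m : ℂ) + 1) * hahnQ n (x + 1) α β (m - 1) =
    (m : ℂ) * hahnQ n (x + 1) α β m :=
  hahn_difference_eq1_general n x m α β hm hn
end
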